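/- arXiv:1302.1124 — 2 statements merged into one kernel-verified Lean document; each statement's English description precedes it below -/
import Mathlib

section
/- Let A = K[x₁,…,xₙ] be a polynomial ring over a field K of prime characteristic p, let W ⊆ A be a multiplicatively closed subset, let J be an ideal of A, and let e ≥ 1. Suppose L₀ is the smallest ideal of A (with respect to inclusion) such that J ⊆ L₀^{[p^e]}, i.e. L₀ = I_e(J). Then the extension W⁻¹L₀ is the smallest ideal L of W⁻¹A such that W⁻¹J ⊆ L^{[p^e]}; in other words, I_e(W⁻¹J) exists and W⁻¹I_e(J) = I_e(W⁻¹J). -/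
/-- The `e`-th Frobenius power `L^{[p^e]}` of an ideal `L`: the ideal generated by
the `p^e`-th powers of the elements of `L`. -/
def frobeniusPower {R : Type*} [CommRing R] (p e : ℕ) (L : Ideal R) : Ideal R :=
  Ideal.span ((fun a => a ^ p ^ e) '' (L : Set R))

/-! The polynomial ring `A = K[x₁, …, xₙ]` is free over its subring of `p^e`-th powers, with
basis `bⱼ x^β` where `(bⱼ)` is a basis of `K` over `K^{p^e}` and `0 ≤ β < p^e`. Since
`f ∈ M^{[p^e]}` iff every coordinate of `f` lies in `M`, and the coordinates of `a^{p^e} f` are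
`a` times those of `f`, we get `(M^{[p^e]} : a^{p^e}) = (M : a)^{[p^e]}`. For `M = L ∩ A` with `L`
an ideal of `W⁻¹A` and `a ∈ W` one has `(M : a) = M`, and every element of `L^{[p^e]} ∩ A` is
multiplied into `M^{[p^e]}` by some `a^{p^e}`, `a ∈ W`; hence `L^{[p^e]} ∩ A = (L ∩ A)^{[p^e]}`.
So `W⁻¹J ⊆ L^{[p^e]}` forces `J ⊆ (L ∩ A)^{[p^e]}`, i.e. `I_e(J) ⊆ L ∩ A`. -/

open MvPolynomial

namespace Finsupp

variable {σ : Type*}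

theorem smul_mapRange_div_add_mapRange_mod (q : ℕ) (α : σ →₀ ℕ) :
    q • α.mapRange (· / q) (Nat.zero_div q) + α.mapRange (· % q) (Nat.zero_mod q) = α := by
  ext; simp [Nat.div_add_mod]

theorem mapRange_div_smul_add {q : ℕ} (hq : 0 < q) (u α : σ →₀ ℕ) :
    (q • u + α).mapRange (· / q) (Nat.zero_div q) = u + α.mapRange (· / q) (Nat.zero_div q) := by
  ext; simp [Nat.mul_add_div hq]

theorem mapRange_mod_smul_add (q : ℕ) (u α : σ →₀ ℕ) :
    (q • u + α).mapRange (· % q) (Nat.zero_mod q) = α.mapRange (· % q) (Nat.zero_mod q) := by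
  ext; simp

end Finsupp

section FrobeniusPower

variable {R : Type*} [CommRing R] (p e : ℕ)

theorem pow_mem_frobeniusPower {I : Ideal R} {a : R} (ha : a ∈ I) :
    a ^ p ^ e ∈ frobeniusPower p e I :=
  Ideal.subset_span ⟨a, ha, rfl⟩

theorem frobeniusPower_mono {I J : Ideal R} (h : I ≤ J) :
    frobeniusPower p e I ≤ frobeniusPower p e J :=
  Ideal.span_mono (Set.image_mono h)

theorem map_frobeniusPower_le {S : Type*} [CommRing S] (f : R →+* S) (I : Ideal R) :
    (frobeniusPower p e I).map f ≤ frobeniusPower p e (I.map f) := by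
  rw [Ideal.map_le_iff_le_comap, frobeniusPower, Ideal.span_le]
  rintro _ ⟨a, ha, rfl⟩
  rw [SetLike.mem_coe, Ideal.mem_comap, map_pow]
  exact pow_mem_frobeniusPower p e (Ideal.mem_map_of_mem f ha)

theorem frobeniusPower_le_map_frobeniusPower_comap {S : Type*} [CommRing S] [Algebra R S]
    (W : Submonoid R) [IsLocalization W S] (L : Ideal S) :
    frobeniusPower p e L ≤
      (frobeniusPower p e (L.comap (algebraMap R S))).map (algebraMap R S) := by
  rw [frobeniusPower, Ideal.span_le]
  rintro _ ⟨y, hy, rfl⟩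
  obtain ⟨⟨m, w⟩, rfl⟩ := IsLocalization.mk'_surjective W y
  simp only at hy ⊢
  rw [SetLike.mem_coe, ← IsLocalization.mk'_pow, IsLocalization.mk'_mem_iff]
  exact Ideal.mem_map_of_mem _ (pow_mem_frobeniusPower p e (IsLocalization.mk'_mem_iff.1 hy))

end FrobeniusPower

/-- A dual basis of `R` over its subring of `p^e`-th powers, i.e. a witness that `R` is projective
as a module over itself through the `e`-th Frobenius. -/
structure FrobeniusDualBasis (R : Type*) [CommRing R] (p e : ℕ) (ι : Type*) where
  coord : R →+ ι →₀ R
  vec : ι → R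
  coord_pow_mul (c f : R) : coord (c ^ p ^ e * f) = c • coord f
  sum_coord (f : R) : (coord f).sum (fun i a => a ^ p ^ e * vec i) = f

namespace FrobeniusDualBasis

variable {R ι : Type*} [CommRing R] {p e : ℕ}

theorem mem_frobeniusPower_iff (B : FrobeniusDualBasis R p e ι) {M : Ideal R} {x : R} :
    x ∈ frobeniusPower p e M ↔ ∀ i, B.coord x i ∈ M := by
  constructor
  · intro hx i
    obtain ⟨n, c, g, rfl⟩ := Submodule.mem_span_set'.1 hx
    rw [map_sum, Finsupp.finsetSum_apply]
    refine Ideal.sum_mem _ fun k _ => ?_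
    obtain ⟨m, hm, hg⟩ := (g k).2
    rw [smul_eq_mul, ← hg, mul_comm, B.coord_pow_mul, Finsupp.smul_apply, smul_eq_mul]
    exact M.mul_mem_right _ hm
  · intro h
    rw [← B.sum_coord x]
    exact Ideal.sum_mem _ fun i _ => Ideal.mul_mem_right _ _ (pow_mem_frobeniusPower p e (h i))

theorem frobeniusPower_colon (B : FrobeniusDualBasis R p e ι) (M : Ideal R) (a : R) :
    (frobeniusPower p e M).colon (Ideal.span {a ^ p ^ e}) =
      frobeniusPower p e (M.colon (Ideal.span {a})) := by
  ext x
  simp only [Ideal.mem_colon_span_singleton, B.mem_frobeniusPower_iff, mul_comm _ (a ^ p ^ e),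
    B.coord_pow_mul, Finsupp.smul_apply, smul_eq_mul, mul_comm a]

theorem comap_frobeniusPower (B : FrobeniusDualBasis R p e ι) {S : Type*} [CommRing S]
    [Algebra R S] (W : Submonoid R) [IsLocalization W S] (hp : 0 < p) (L : Ideal S) :
    (frobeniusPower p e L).comap (algebraMap R S) =
      frobeniusPower p e (L.comap (algebraMap R S)) := by
  refine le_antisymm (fun x hx => ?_) ?_
  · obtain ⟨w, hw, hwx⟩ := (IsLocalization.algebraMap_mem_map_algebraMap_iff W S _ x).1
      (frobeniusPower_le_map_frobeniusPower_comap p e W L hx)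
    have hsat : (L.comap (algebraMap R S)).colon (Ideal.span {w}) ≤ L.comap (algebraMap R S) :=
      fun y hy => by
        rw [Ideal.mem_colon_span_singleton, Ideal.mem_comap, map_mul] at hy
        exact (Ideal.mul_unit_mem_iff_mem _ (IsLocalization.map_units S ⟨w, hw⟩)).1 hy
    refine frobeniusPower_mono p e hsat ?_
    rw [← B.frobeniusPower_colon, Ideal.mem_colon_span_singleton, mul_comm,
      ← Nat.sub_add_cancel (pow_pos hp e), pow_succ, mul_assoc]
    exact Ideal.mul_mem_left _ _ hwx
  · rw [← Ideal.map_le_iff_le_comap]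
    exact (map_frobeniusPower_le p e _ _).trans (frobeniusPower_mono p e Ideal.map_comap_le)

end FrobeniusDualBasis

/-- `R` as a module over itself through the `e`-th Frobenius, `F^e_* R`. -/
def FrobeniusTwist (R : Type*) (_p _e : ℕ) : Type _ := R

instance {R : Type*} [CommRing R] {p e : ℕ} : AddCommGroup (FrobeniusTwist R p e) :=
  inferInstanceAs (AddCommGroup R)

instance {R : Type*} [CommRing R] {p e : ℕ} [ExpChar R p] : Module R (FrobeniusTwist R p e) :=
  Module.compHom R (iterateFrobenius R p e)

namespace FrobeniusDualBasis

variable {R ι : Type*} [CommRing R] {p e : ℕ}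

noncomputable def ofBasis [ExpChar R p] (b : Module.Basis ι R (FrobeniusTwist R p e)) :
    FrobeniusDualBasis R p e ι where
  coord := b.repr.toLinearMap.toAddMonoidHom
  vec := b
  coord_pow_mul c f := b.repr.map_smul c f
  sum_coord f := b.linearCombination_repr f

section MvPolynomial

variable {σ : Type*}

noncomputable def mvPolynomialCoord (B : FrobeniusDualBasis R p e ι) :
    MvPolynomial σ R →+ ι × (σ →₀ ℕ) →₀ MvPolynomial σ R :=
  (Finsupp.liftAddHom fun α =>
      (Finsupp.mapRange.addMonoidHom
          (monomial (α.mapRange (· / p ^ e) (Nat.zero_div _))).toAddMonoidHom).comp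
        ((Finsupp.mapDomain.addMonoidHom fun i =>
          (i, α.mapRange (· % p ^ e) (Nat.zero_mod _))).comp B.coord)).comp
    AddMonoidAlgebra.coeffAddEquiv.toAddMonoidHom

theorem mvPolynomialCoord_monomial (B : FrobeniusDualBasis R p e ι) (α : σ →₀ ℕ) (a : R) :
    B.mvPolynomialCoord (monomial α a) =
      ((B.coord a).mapDomain fun i => (i, α.mapRange (· % p ^ e) (Nat.zero_mod _))).mapRange
        (monomial (α.mapRange (· / p ^ e) (Nat.zero_div _))) (map_zero _) := by
  simp [mvPolynomialCoord]

variable [ExpChar R p]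

theorem mvPolynomialCoord_pow_mul (B : FrobeniusDualBasis R p e ι) (c f : MvPolynomial σ R) :
    B.mvPolynomialCoord (c ^ p ^ e * f) = c • B.mvPolynomialCoord f := by
  induction c using MvPolynomial.induction_on' generalizing f with
  | add c₁ c₂ h₁ h₂ => rw [add_pow_expChar_pow, add_mul, map_add, h₁, h₂, add_smul]
  | monomial u a =>
    induction f using MvPolynomial.induction_on' with
    | add f₁ f₂ h₁ h₂ => rw [mul_add, map_add, h₁, h₂, map_add, smul_add]
    | monomial α b =>
      rw [monomial_pow, monomial_mul, mvPolynomialCoord_monomial, mvPolynomialCoord_monomial,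
        Finsupp.mapRange_div_smul_add (expChar_pow_pos R p e), Finsupp.mapRange_mod_smul_add,
        B.coord_pow_mul, Finsupp.mapDomain_smul]
      ext k
      simp [monomial_mul]

theorem sum_mvPolynomialCoord (B : FrobeniusDualBasis R p e ι) (f : MvPolynomial σ R) :
    (B.mvPolynomialCoord f).sum (fun iβ P => P ^ p ^ e * monomial iβ.2 (B.vec iβ.1)) = f := by
  have hq : p ^ e ≠ 0 := (expChar_pow_pos R p e).ne'
  induction f using MvPolynomial.induction_on' with
  | add f g hf hg =>
    rw [map_add, Finsupp.sum_add_index' (fun _ => by rw [zero_pow hq, zero_mul])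
      (fun _ _ _ => by rw [add_pow_expChar_pow, add_mul]), hf, hg]
  | monomial α a =>
    rw [mvPolynomialCoord_monomial,
      Finsupp.sum_mapRange_index (fun _ => by rw [zero_pow hq, zero_mul]),
      Finsupp.sum_mapDomain_index (fun _ => by rw [map_zero, zero_pow hq, zero_mul])
        (fun _ _ _ => by rw [map_add, add_pow_expChar_pow, add_mul])]
    simp only [monomial_pow, monomial_mul]
    rw [← map_finsuppSum, B.sum_coord, Finsupp.smul_mapRange_div_add_mapRange_mod]

noncomputable def mvPolynomial (B : FrobeniusDualBasis R p e ι) :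
    FrobeniusDualBasis (MvPolynomial σ R) p e (ι × (σ →₀ ℕ)) where
  coord := B.mvPolynomialCoord
  vec iβ := monomial iβ.2 (B.vec iβ.1)
  coord_pow_mul := B.mvPolynomialCoord_pow_mul
  sum_coord := B.sum_mvPolynomialCoord

end MvPolynomial

end FrobeniusDualBasis

theorem Ie_commutes_with_localization_general (p n : ℕ) (hp : p.Prime)
    (K : Type*) [Field K] [CharP K p]
    (W : Submonoid (MvPolynomial (Fin n) K)) (J : Ideal (MvPolynomial (Fin n) K))
    (e : ℕ) (L₀ : Ideal (MvPolynomial (Fin n) K))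
    (h₁ : J ≤ frobeniusPower p e L₀)
    (h₂ : ∀ L : Ideal (MvPolynomial (Fin n) K), J ≤ frobeniusPower p e L → L₀ ≤ L) :
    J.map (algebraMap (MvPolynomial (Fin n) K) (Localization W)) ≤
        frobeniusPower p e
          (L₀.map (algebraMap (MvPolynomial (Fin n) K) (Localization W))) ∧
      ∀ L : Ideal (Localization W),
        J.map (algebraMap (MvPolynomial (Fin n) K) (Localization W)) ≤
          frobeniusPower p e L →
        L₀.map (algebraMap (MvPolynomial (Fin n) K) (Localization W)) ≤ L := by
  have : Fact p.Prime := ⟨hp⟩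
  let B := (FrobeniusDualBasis.ofBasis
    (Module.Free.chooseBasis K (FrobeniusTwist K p e))).mvPolynomial (σ := Fin n)
  refine ⟨(Ideal.map_mono h₁).trans (map_frobeniusPower_le p e _ L₀), fun L hL => ?_⟩
  rw [Ideal.map_le_iff_le_comap] at hL ⊢
  exact h₂ _ (hL.trans (B.comap_frobeniusPower W hp.pos L).le)

/-- Let `A = K[x₁, …, xₙ]` be a polynomial ring over a field `K` of prime
characteristic `p`, `W ⊆ A` multiplicatively closed, `J ⊆ A` an ideal and `e ≥ 1`.
If `L₀ = I_e(J)` is the smallest ideal of `A` whose `e`-th Frobenius power contains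
`J`, then the extension `W⁻¹L₀` is the smallest ideal `L` of `W⁻¹A` with
`W⁻¹J ⊆ L^{[p^e]}`; that is, `I_e(W⁻¹J)` exists and `W⁻¹I_e(J) = I_e(W⁻¹J)`. -/
theorem Ie_commutes_with_localization (p n : ℕ) (hp : p.Prime)
    (K : Type*) [Field K] [CharP K p]
    (W : Submonoid (MvPolynomial (Fin n) K)) (J : Ideal (MvPolynomial (Fin n) K))
    (e : ℕ) (he : 1 ≤ e) (L₀ : Ideal (MvPolynomial (Fin n) K))
    (h₁ : J ≤ frobeniusPower p e L₀)
    (h₂ : ∀ L : Ideal (MvPolynomial (Fin n) K), J ≤ frobeniusPower p e L → L₀ ≤ L) :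
    J.map (algebraMap (MvPolynomial (Fin n) K) (Localization W)) ≤
        frobeniusPower p e
          (L₀.map (algebraMap (MvPolynomial (Fin n) K) (Localization W))) ∧
      ∀ L : Ideal (Localization W),
        J.map (algebraMap (MvPolynomial (Fin n) K) (Localization W)) ≤
          frobeniusPower p e L →
        L₀.map (algebraMap (MvPolynomial (Fin n) K) (Localization W)) ≤ L :=
  Ie_commutes_with_localization_general p n hp K W J e L₀ h₁ h₂
end

section
/- Let A be a commutative ring and M an A-module generated by elements g₁, …, g_s. Let φ : A^s → M be the A-linear map sending the j-th standard basis vector e_j to g_j, and let J be an s × t matrix with entries in A such that the image of the induced map A^t → A^s equals ker φ. Fix i ∈ {1, …, s}, let J_i denote the (s−1) × t matrix obtained from J by deleting the i-th row, and let W ⊆ A be any multiplicatively closed subset. Then the localized module W⁻¹M is generated over W⁻¹A by the single element g_i/1 if and only if the (W⁻¹A)-linear map (W⁻¹A)^t → (W⁻¹A)^{s−1} induced by the matrix J_i (with entries viewed in W⁻¹A) is surjective. -/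
/-!
Both sides say that a submodule becomes everything after inverting `W`. In `Aˢ` put
`K = A·eᵢ` and `N = ker φ = im J`. Then `A·gᵢ = φ(K)`, while the image of `Jᵢ` is `π(N)` for the
row-deleting projection `π : Aˢ → A^(s-1)`, whose kernel is `K`. Localization commutes with images,
and pulling back along the surjections `φ` and `π` turns both conditions into `W⁻¹(K + N) = W⁻¹Aˢ`.
-/

open Function

namespace Submodule

def LocalizesToTop {A M : Type*} [CommSemiring A] [AddCommMonoid M] [Module A M]
    (W : Submonoid A) (P : Submodule A M) : Prop :=
  ∀ m : M, ∃ r ∈ W, r • m ∈ P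

theorem localizesToTop_map_iff {A F M : Type*} [CommRing A] [AddCommGroup F] [Module A F]
    [AddCommGroup M] [Module A M] (W : Submonoid A)
    {φ : F →ₗ[A] M} (hφ : Surjective φ) (P : Submodule A F) :
    (P.map φ).LocalizesToTop W ↔ (P ⊔ LinearMap.ker φ).LocalizesToTop W := by
  simp only [LocalizesToTop, hφ.forall, ← comap_map_eq, mem_comap, map_smul]

end Submodule

namespace IsLocalizedModule

theorem surjective_iff_localizesToTop_range {A M N M' N' : Type*} [CommSemiring A]
    [AddCommMonoid M] [Module A M] [AddCommMonoid N] [Module A N]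
    [AddCommMonoid M'] [Module A M'] [AddCommMonoid N'] [Module A N'] (W : Submonoid A)
    (f : M →ₗ[A] M') (g : N →ₗ[A] N') [IsLocalizedModule W f] [IsLocalizedModule W g]
    {h : M →ₗ[A] N} {h' : M' →ₗ[A] N'} (comm : h' ∘ₗ f = g ∘ₗ h) :
    Surjective h' ↔ (LinearMap.range h).LocalizesToTop W := by
  obtain rfl : h' = map W f g h := linearMap_ext W f g (comm.trans (map_comp W f g h).symm)
  rw [← LinearMap.range_eq_top, LinearMap.range_localizedMap_eq_localized₀_range, eq_top_iff]
  constructor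
  · intro htop n
    obtain ⟨m, hm, s, hs⟩ := htop (Submodule.mem_top : g n ∈ ⊤)
    rw [mk'_eq_iff, Submonoid.smul_def, ← map_smul] at hs
    obtain ⟨c, hc⟩ := exists_of_eq (S := W) hs
    refine ⟨c * s, mul_mem c.2 s.2, ?_⟩
    rw [mul_smul, ← Submonoid.smul_def, ← hc]
    exact Submodule.smul_of_tower_mem _ c hm
  · intro hloc y _
    obtain ⟨⟨n, s⟩, rfl⟩ := mk'_surjective W g y
    obtain ⟨r, hr, hrn⟩ := hloc n
    exact ⟨r • n, hrn, ⟨r, hr⟩ * s, mk'_cancel_left g n ⟨r, hr⟩ s⟩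

end IsLocalizedModule

theorem LocalizedModule.span_singleton_mkLinearMap_eq_top_iff {A M : Type*} [CommSemiring A]
    [AddCommMonoid M] [Module A M] (W : Submonoid A) (m : M) :
    Submodule.span (Localization W) {mkLinearMap W M m} = ⊤ ↔
      (Submodule.span A {m}).LocalizesToTop W := by
  rw [LinearMap.span_singleton_eq_range, LinearMap.span_singleton_eq_range,
    LinearMap.range_eq_top]
  refine IsLocalizedModule.surjective_iff_localizesToTop_range W (Algebra.linearMap A _)
    (mkLinearMap W M)
    (h' := (LinearMap.toSpanSingleton _ _ (mkLinearMap W M m)).restrictScalars A) ?_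
  ext
  simp

theorem Matrix.surjective_mulVecLin_map_algebraMap_iff {A m n : Type*} [CommSemiring A]
    [Fintype n] [Finite m] (W : Submonoid A) (L : Type*) [CommSemiring L] [Algebra A L]
    [IsLocalization W L] (B : Matrix m n A) :
    Surjective (B.map (algebraMap A L)).mulVecLin ↔
      (LinearMap.range B.mulVecLin).LocalizesToTop W := by
  refine IsLocalizedModule.surjective_iff_localizesToTop_range W
    (.pi fun k ↦ Algebra.linearMap A L ∘ₗ LinearMap.proj k)
    (.pi fun k ↦ Algebra.linearMap A L ∘ₗ LinearMap.proj k)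
    (h' := (B.map (algebraMap A L)).mulVecLin.restrictScalars A) ?_
  ext v : 1
  funext k
  exact (RingHom.map_mulVec _ B v k).symm

theorem LinearMap.ker_funLeft_subtype_ne {A ι : Type*} [Semiring A] [DecidableEq ι] (i : ι) :
    ker (funLeft A A (Subtype.val : {j // j ≠ i} → ι)) = Submodule.span A {Pi.single i 1} := by
  ext x
  simp only [mem_ker, Submodule.mem_span_singleton]
  constructor
  · intro hx
    refine ⟨x i, funext fun j ↦ ?_⟩
    by_cases hj : j = i
    · subst hj; simp
    · simpa [hj] using (congrFun hx ⟨j, hj⟩).symm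
  · rintro ⟨a, rfl⟩
    funext j
    simp [Pi.single_eq_of_ne j.2]

/-- Let `M` be an `A`-module generated by `g₁, …, g_s`, let `φ : Aˢ → M` send the
`j`-th standard basis vector to `g_j`, and let `J` be an `s × t` matrix over `A`
whose column space equals `ker φ`. Fix `i` and let `J_i` be `J` with the `i`-th row
deleted, and let `W ⊆ A` be multiplicatively closed. Then `W⁻¹M` is generated over
`W⁻¹A` by the single element `g_i/1` if and only if the `(W⁻¹A)`-linear map
`(W⁻¹A)ᵗ → (W⁻¹A)^{s-1}` induced by `J_i` (entries viewed in `W⁻¹A`) is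
surjective. -/
theorem localized_span_singleton_generator_iff_deleted_row_surjective
    (A : Type*) [CommRing A] (M : Type*) [AddCommGroup M] [Module A M]
    (s t : ℕ) (g : Fin s → M)
    (φ : (Fin s → A) →ₗ[A] M) (hφ : ∀ j : Fin s, φ (Pi.single j 1) = g j)
    (hsurj : Function.Surjective φ)
    (J : Matrix (Fin s) (Fin t) A)
    (hJ : LinearMap.range J.mulVecLin = LinearMap.ker φ)
    (i : Fin s) (W : Submonoid A) :
    Submodule.span (Localization W) {LocalizedModule.mkLinearMap W M (g i)} =
        (⊤ : Submodule (Localization W) (LocalizedModule W M)) ↔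
      Function.Surjective
        (Matrix.mulVecLin
          ((J.submatrix (fun j : {j : Fin s // j ≠ i} => (j : Fin s)) id).map
            (algebraMap A (Localization W)))) := by
  let π := LinearMap.funLeft A A (Subtype.val : {j : Fin s // j ≠ i} → Fin s)
  have hspan : Submodule.span A {g i} = (Submodule.span A {Pi.single i 1}).map φ := by
    rw [Submodule.map_span, Set.image_singleton, hφ]
  have hrange : LinearMap.range
      (J.submatrix (fun j : {j : Fin s // j ≠ i} => (j : Fin s)) id).mulVecLin =
        (LinearMap.ker φ).map π := by
    rw [← hJ, ← LinearMap.range_comp]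
    rfl
  rw [LocalizedModule.span_singleton_mkLinearMap_eq_top_iff,
    Matrix.surjective_mulVecLin_map_algebraMap_iff W, hspan, hrange,
    Submodule.localizesToTop_map_iff W hsurj,
    Submodule.localizesToTop_map_iff W
      (LinearMap.funLeft_surjective_of_injective _ _ _ Subtype.val_injective),
    LinearMap.ker_funLeft_subtype_ne, sup_comm]
end
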